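/- arXiv:1512.02940 — 5 statements merged into one kernel-verified Lean document; each statement's English description precedes it below -/
import Mathlib

section
/- Let n ≥ 2 and let v_0,…,v_n be affinely independent points in ℝ^n forming an n-simplex S such that ⟨v_j − v_i, v_k − v_i⟩ ≥ 0 for all pairwise distinct i, j, k (all triangular faces of S are nonobtuse, so all vertex Gramians of S are entrywise nonnegative). If every 3×3 principal submatrix of every vertex Gramian of S is nonblocking, then the inverse of every vertex Gramian of S is a weakly diagonally dominant Stieltjes matrix (i.e., S is a nonobtuse simplex). -/
open Matrix Finset
open scoped RealInnerProductSpace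

noncomputable section

/-- The vertex Gramian of the simplex with vertices `v` associated with vertex `v ℓ`. -/
def vGram {n : ℕ} (v : Fin (n + 1) → EuclideanSpace ℝ (Fin n)) (ℓ : Fin (n + 1)) :
    Matrix {k : Fin (n + 1) // k ≠ ℓ} {k : Fin (n + 1) // k ≠ ℓ} ℝ :=
  Matrix.of fun i j => ⟪v i.1 - v ℓ, v j.1 - v ℓ⟫

/-- A Stieltjes matrix: symmetric positive definite with nonpositive off-diagonal entries. -/
def IsStieltjes {ι : Type*} [Fintype ι] (M : Matrix ι ι ℝ) : Prop :=
  M.PosDef ∧ ∀ i j, i ≠ j → M i j ≤ 0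

/-- Weakly diagonally dominant: `M e ≥ 0` entrywise for the all-ones vector `e`. -/
def IsWDD {ι : Type*} [Fintype ι] (M : Matrix ι ι ℝ) : Prop :=
  ∀ i, 0 ≤ ∑ j, M i j

/-- Pointwise weakly diagonally dominant: each diagonal entry is maximal in its row. -/
def PWDD {ι : Type*} (M : Matrix ι ι ℝ) : Prop :=
  ∀ i j, M i j ≤ M i i

/-- The orthogonal projection of `x` onto the affine span of `{v k : k ∈ s}`
lies in the convex hull of `{v k : k ∈ s}`. -/
def ProjInHull {n : ℕ} (x : EuclideanSpace ℝ (Fin n))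
    (v : Fin (n + 1) → EuclideanSpace ℝ (Fin n)) (s : Set (Fin (n + 1))) : Prop :=
  ∃ p ∈ convexHull ℝ (v '' s), ∀ a ∈ s, ∀ b ∈ s, ⟪x - p, v a - v b⟫ = 0

/-- All facets of the simplex are nonobtuse: each vertex `v i` projects, for each `j ≠ i`,
into the convex hull of the vertices other than `v i, v j`. -/
def FacetsNonobtuse {n : ℕ} (v : Fin (n + 1) → EuclideanSpace ℝ (Fin n)) : Prop :=
  ∀ i j : Fin (n + 1), i ≠ j → ProjInHull (v i) v {k | k ≠ i ∧ k ≠ j}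

/-- `q` is an inward normal to the facet opposite `v j`. -/
def IsInwardNormal {n : ℕ} (v : Fin (n + 1) → EuclideanSpace ℝ (Fin n)) (j : Fin (n + 1))
    (q : EuclideanSpace ℝ (Fin n)) : Prop :=
  q ≠ 0 ∧ (∀ a b : Fin (n + 1), a ≠ j → b ≠ j → ⟪q, v a - v b⟫ = 0) ∧
    ∀ k : Fin (n + 1), k ≠ j → 0 < ⟪q, v j - v k⟫

/-- The `j`-th column of `A` is a blocking column: no off-diagonal entry of column `j`
is minimal in its row. -/
def IsBlockingCol {ι : Type*} (A : Matrix ι ι ℝ) (j : ι) : Prop :=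
  ∀ i, i ≠ j → ∃ k, A i k < A i j

/-- `A` is nonblocking: every column has an off-diagonal entry minimal in its row. -/
def IsNonblocking {ι : Type*} (A : Matrix ι ι ℝ) : Prop :=
  ∀ j, ∃ i, i ≠ j ∧ ∀ k, A i j ≤ A i k

/-- A (symmetric nonnegative) ultrametric matrix. -/
def IsUltra {ι : Type*} (A : Matrix ι ι ℝ) : Prop :=
  (∀ i j, 0 ≤ A i j) ∧ (∀ i j, A i j ≤ A i i) ∧ ∀ i j k, min (A i k) (A k j) ≤ A i j

/-- The principal submatrix of `A` with rows and columns restricted to `s`. -/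
def subMat {ι : Type*} (A : Matrix ι ι ℝ) (s : Finset ι) :
    Matrix {x // x ∈ s} {x // x ∈ s} ℝ :=
  A.submatrix (fun i => i.1) (fun j => j.1)

/-- The principal submatrix of `A` obtained by deleting row and column `m`. -/
def delMat {ι : Type*} (A : Matrix ι ι ℝ) (m : ι) : Matrix {i // i ≠ m} {i // i ≠ m} ℝ :=
  A.submatrix (fun i => i.1) (fun j => j.1)

section Tetra

variable {V : Type*} [NormedAddCommGroup V] [InnerProductSpace ℝ V]

/-- The triangle with vertices `a, b, c` is nonobtuse. -/
def NonobtuseTri (a b c : V) : Prop :=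
  0 ≤ ⟪b - a, c - a⟫ ∧ 0 ≤ ⟪a - b, c - b⟫ ∧ 0 ≤ ⟪a - c, b - c⟫

/-- The sub-orthocentric set of the triangle `a b c`: the union over the vertices of the
closed segments from the vertex to the orthocenter. -/
def SubOrthoSet (a b c : V) : Set V :=
  {x | ∃ h, h ∈ affineSpan ℝ ({a, b, c} : Set V) ∧
    ⟪h - a, b - c⟫ = 0 ∧ ⟪h - b, a - c⟫ = 0 ∧
    (x ∈ segment ℝ a h ∨ x ∈ segment ℝ b h ∨ x ∈ segment ℝ c h)}

/-- `p` is the orthogonal projection of `x` onto the affine span of `{a, b, c}`. -/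
def IsOrthProjTri (x p a b c : V) : Prop :=
  p ∈ affineSpan ℝ ({a, b, c} : Set V) ∧ ⟪x - p, b - a⟫ = 0 ∧ ⟪x - p, c - a⟫ = 0

/-- A sub-orthocentric tetrahedron: all triangular faces are nonobtuse and each vertex
projects orthogonally into the sub-orthocentric set of its opposite face. -/
def IsSubOrthoTetra (w : Fin 4 → V) : Prop :=
  ∀ i : Fin 4,
    NonobtuseTri (w (i.succAbove 0)) (w (i.succAbove 1)) (w (i.succAbove 2)) ∧
    ∃ p, IsOrthProjTri (w i) p (w (i.succAbove 0)) (w (i.succAbove 1)) (w (i.succAbove 2)) ∧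
      p ∈ SubOrthoSet (w (i.succAbove 0)) (w (i.succAbove 1)) (w (i.succAbove 2))

end Tetra

/-!
The vertex Gramian `G` of a simplex with nonobtuse triangles is nonnegative and each diagonal
entry dominates its row; nonblocking `3 × 3` principal submatrices then force the ultrametric
inequality `min (G i k) (G k j) ≤ G i j`. It remains to show that the inverse of a positive
definite ultrametric matrix `A` is a weakly diagonally dominant Stieltjes matrix, by induction
on the size. If `τ` is the least entry of `A`, the indices split into blocks `S`, `Sᶜ` with
all entries between them equal to `τ`. Writing `w = (A_{Sᶜ})⁻¹ 𝟙 ≥ 0` and `γ = 𝟙ᵀ w`, the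
Schur complement of `Sᶜ` is `A_S - τ² γ 𝟙𝟙ᵀ`; it is again ultrametric because `τ γ ≤ 1`, and
its inverse is the `S`-block of `A⁻¹`. The induction hypothesis for it and for `A_{Sᶜ}` gives
the signs of all entries of `A⁻¹` in the columns indexed by `S`, and the row sums on `S`.
-/

namespace IsUltra

variable {ι : Type*} {A : Matrix ι ι ℝ}

theorem submatrix (hA : IsUltra A) {κ : Type*} (e : κ → ι) : IsUltra (A.submatrix e e) :=
  ⟨fun _ _ => hA.1 _ _, fun _ _ => hA.2.1 _ _, fun _ _ _ => hA.2.2 _ _ _⟩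

theorem sub_const (hA : IsUltra A) {t : ℝ} (ht : ∀ i j, t ≤ A i j) :
    IsUltra (A - of fun _ _ => t) := by
  refine ⟨fun i j => ?_, fun i j => ?_, fun i j k => ?_⟩
  · simpa using ht i j
  · simpa using hA.2.1 i j
  · simpa [min_sub_sub_right] using hA.2.2 i j k

end IsUltra

theorem subMat_mulVec_apply {κ : Type*} (A : Matrix κ κ ℝ) (s : Finset κ) (x : κ → ℝ) (i : s) :
    (subMat A s *ᵥ fun k => x k) i = ∑ k ∈ s, A i k * x k :=
  Finset.sum_coe_sort s fun k => A i k * x k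

theorem mulVec_one_apply {m n : Type*} [Fintype n] (A : Matrix m n ℝ) (i : m) :
    (A *ᵥ 1) i = ∑ j, A i j := by
  simp [mulVec, dotProduct]

theorem mul_sum_le_one_of_mulVec_eq_one {m : Type*} [Fintype m] [Nonempty m]
    {C : Matrix m m ℝ} {w : m → ℝ} {τ : ℝ} (hw : ∀ k, 0 ≤ w k) (hCw : C *ᵥ w = 1)
    (hτ : ∀ i j, τ ≤ C i j) : τ * ∑ k, w k ≤ 1 := by
  obtain ⟨i⟩ := ‹Nonempty m›
  calc τ * ∑ k, w k = ∑ k, τ * w k := Finset.mul_sum _ _ _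
    _ ≤ ∑ k, C i k * w k := Finset.sum_le_sum fun k _ => mul_le_mul_of_nonneg_right (hτ i k) (hw k)
    _ = 1 := congrFun hCw i

section ConstantCrossBlock

variable {κ : Type*} [Fintype κ] [DecidableEq κ]

def IsConstOffBlocks (A : Matrix κ κ ℝ) (S : Finset κ) (τ : ℝ) : Prop :=
  ∀ i k, (i ∈ S ↔ k ∉ S) → A i k = τ

/-- When every entry between `S` and `Sᶜ` equals `τ`, this is the Schur complement of the block
`Sᶜ` in `A`, since then `A_{S,Sᶜ} (A_{Sᶜ})⁻¹ A_{Sᶜ,S} = τ² (𝟙ᵀ (A_{Sᶜ})⁻¹ 𝟙) 𝟙𝟙ᵀ`. -/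
def blockSchur (A : Matrix κ κ ℝ) (S : Finset κ) (τ : ℝ) : Matrix S S ℝ :=
  subMat A S - of fun _ _ => τ ^ 2 * ∑ k, ((subMat A Sᶜ)⁻¹ *ᵥ 1) k

variable {A : Matrix κ κ ℝ} {S : Finset κ} {τ : ℝ}

theorem IsConstOffBlocks.compl (h : IsConstOffBlocks A S τ) : IsConstOffBlocks A Sᶜ τ :=
  fun i k hik => h i k (by simp only [Finset.mem_compl, not_not] at hik; tauto)

theorem apply_compl_eq_of_mulVec_eq (hcross : IsConstOffBlocks A S τ)
    (hC : IsUnit (subMat A Sᶜ).det) {x f : κ → ℝ} (hx : A *ᵥ x = f) {c : ℝ}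
    (hf : ∀ i ∉ S, f i = c) (i : {x // x ∈ Sᶜ}) :
    x i = (c - τ * ∑ k ∈ S, x k) * ((subMat A Sᶜ)⁻¹ *ᵥ 1) i := by
  have hCx : subMat A Sᶜ *ᵥ (fun k : {x // x ∈ Sᶜ} => x k) = (c - τ * ∑ k ∈ S, x k) • 1 := by
    ext i
    have hi : (i : κ) ∉ S := Finset.mem_compl.1 i.2
    have hrow := congrFun hx i
    rw [mulVec, dotProduct, ← Finset.sum_add_sum_compl S, hf i hi,
      Finset.sum_congr rfl fun k hk => by rw [hcross i k (iff_of_false hi (not_not.2 hk))],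
      ← Finset.mul_sum] at hrow
    rw [subMat_mulVec_apply]
    simp only [Pi.smul_apply, Pi.one_apply, smul_eq_mul, mul_one]
    linarith
  have := congrArg ((subMat A Sᶜ)⁻¹ *ᵥ ·) hCx
  simp only [mulVec_mulVec, nonsing_inv_mul _ hC, one_mulVec, mulVec_smul] at this
  exact congrFun this i

theorem blockSchur_mulVec_apply (hcross : IsConstOffBlocks A S τ)
    (hC : IsUnit (subMat A Sᶜ).det) {x f : κ → ℝ} (hx : A *ᵥ x = f) {c : ℝ}
    (hf : ∀ i ∉ S, f i = c) (i : S) :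
    (blockSchur A S τ *ᵥ fun k => x k) i =
      f i - τ * c * ∑ k, ((subMat A Sᶜ)⁻¹ *ᵥ 1) k := by
  rw [blockSchur, sub_mulVec, Pi.sub_apply, subMat_mulVec_apply]
  set γ := ∑ k, ((subMat A Sᶜ)⁻¹ *ᵥ 1) k
  have hcompl : ∑ k ∈ Sᶜ, x k = (c - τ * ∑ k ∈ S, x k) * γ := by
    rw [← Finset.sum_coe_sort, Finset.mul_sum]
    exact Finset.sum_congr rfl fun k _ => apply_compl_eq_of_mulVec_eq hcross hC hx hf k
  have hcross_sum : ∑ k ∈ Sᶜ, A i k * x k = τ * ∑ k ∈ Sᶜ, x k := by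
    rw [Finset.mul_sum]
    exact Finset.sum_congr rfl fun k hk => by
      rw [hcross i k (iff_of_true i.2 (Finset.mem_compl.1 hk))]
  have hrow := congrFun hx i
  rw [mulVec, dotProduct, ← Finset.sum_add_sum_compl S, hcross_sum, hcompl] at hrow
  clear_value γ
  simp only [mulVec, dotProduct, of_apply, ← Finset.mul_sum, Finset.sum_coe_sort S x]
  linear_combination hrow

theorem mulVec_col_inv {A : Matrix κ κ ℝ} (hA : IsUnit A.det) (j : κ) :
    A *ᵥ A⁻¹.col j = Pi.single j 1 := by
  rw [← mulVec_single_one, mulVec_mulVec, mul_nonsing_inv A hA, one_mulVec]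

theorem blockSchur_mul_subMat_inv (hcross : IsConstOffBlocks A S τ)
    (hC : IsUnit (subMat A Sᶜ).det) (hA : IsUnit A.det) :
    blockSchur A S τ * subMat A⁻¹ S = 1 := by
  ext i j
  have hf : ∀ k ∉ S, (Pi.single (j : κ) 1 : κ → ℝ) k = 0 := fun k hk =>
    Pi.single_eq_of_ne (fun h : k = j => hk (h ▸ j.2)) _
  rw [mul_apply]
  convert blockSchur_mulVec_apply hcross hC (mulVec_col_inv hA j) hf i using 1
  · rfl
  · rw [mul_zero, zero_mul, sub_zero]
    by_cases hij : i = j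
    · rw [hij, one_apply_eq, Pi.single_eq_same]
    · rw [one_apply_ne hij, Pi.single_eq_of_ne (Subtype.coe_injective.ne hij)]

theorem sum_inv_apply_eq_blockSchur (hcross : IsConstOffBlocks A S τ)
    (hC : IsUnit (subMat A Sᶜ).det) (hA : IsUnit A.det) (i : S) :
    ∑ j, A⁻¹ i j =
      (1 - τ * ∑ k, ((subMat A Sᶜ)⁻¹ *ᵥ 1) k) * ((blockSchur A S τ)⁻¹ *ᵥ 1) i := by
  have hy : A *ᵥ (A⁻¹ *ᵥ 1) = 1 := by rw [mulVec_mulVec, mul_nonsing_inv A hA, one_mulVec]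
  have hSchur : blockSchur A S τ *ᵥ (fun k => (A⁻¹ *ᵥ 1) k) =
      (1 - τ * ∑ k, ((subMat A Sᶜ)⁻¹ *ᵥ 1) k) • 1 := by
    ext k
    rw [blockSchur_mulVec_apply hcross hC hy (c := 1) (fun _ _ => rfl)]
    simp
  have hdet := isUnit_det_of_right_inverse (blockSchur_mul_subMat_inv hcross hC hA)
  have := congrFun (congrArg ((blockSchur A S τ)⁻¹ *ᵥ ·) hSchur) i
  simp only [mulVec_mulVec, nonsing_inv_mul _ hdet, one_mulVec, mulVec_smul] at this
  rw [Pi.smul_apply, smul_eq_mul] at this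
  rw [← this, mulVec_one_apply]

theorem blockSchur_posDef_and_inv_eq (hcross : IsConstOffBlocks A S τ)
    (hA : A.PosDef) :
    (blockSchur A S τ).PosDef ∧ (blockSchur A S τ)⁻¹ = subMat A⁻¹ S := by
  have hC : IsUnit (subMat A Sᶜ).det :=
    (isUnit_iff_isUnit_det _).1 (hA.submatrix Subtype.val_injective).isUnit
  have hmul := blockSchur_mul_subMat_inv hcross hC ((isUnit_iff_isUnit_det _).1 hA.isUnit)
  have hN : (subMat A⁻¹ S).PosDef := hA.inv.submatrix Subtype.val_injective
  refine ⟨?_, inv_eq_right_inv hmul⟩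
  rw [← inv_eq_right_inv (mul_eq_one_comm.1 hmul)]
  exact hN.inv

theorem inv_col_nonpos_and_sum_nonneg_of_block (hA : A.PosDef) (hU : IsUltra A) (hτ : 0 ≤ τ)
    (hτA : ∀ i j, τ ≤ A i j) (hcross : IsConstOffBlocks A S τ) (hSc : Sᶜ.Nonempty)
    (ihS : ∀ B : Matrix S S ℝ, IsUltra B → B.PosDef → IsStieltjes B⁻¹ ∧ IsWDD B⁻¹)
    (ihSc : ∀ B : Matrix {x // x ∈ Sᶜ} {x // x ∈ Sᶜ} ℝ, IsUltra B → B.PosDef →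
      IsStieltjes B⁻¹ ∧ IsWDD B⁻¹) :
    (∀ j ∈ S, ∀ i, i ≠ j → A⁻¹ i j ≤ 0) ∧ ∀ i ∈ S, 0 ≤ ∑ j, A⁻¹ i j := by
  have hCpd : (subMat A Sᶜ).PosDef := hA.submatrix Subtype.val_injective
  have hC : IsUnit (subMat A Sᶜ).det := (isUnit_iff_isUnit_det _).1 hCpd.isUnit
  have hAdet : IsUnit A.det := (isUnit_iff_isUnit_det _).1 hA.isUnit
  set w := (subMat A Sᶜ)⁻¹ *ᵥ 1 with hw_def
  have hw : ∀ k, 0 ≤ w k := fun k => by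
    rw [hw_def, mulVec_one_apply]
    exact (ihSc _ (hU.submatrix _) hCpd).2 k
  have hτγ : τ * ∑ k, w k ≤ 1 := by
    have := hSc.to_subtype
    refine mul_sum_le_one_of_mulVec_eq_one (C := subMat A Sᶜ) hw ?_ fun i j => hτA i j
    rw [hw_def, mulVec_mulVec, mul_nonsing_inv _ hC, one_mulVec]
  obtain ⟨hSchur_pd, hSchur_inv⟩ := blockSchur_posDef_and_inv_eq hcross hA
  have hSchurU : IsUltra (blockSchur A S τ) := by
    refine (hU.submatrix _).sub_const fun i j => ?_
    calc τ ^ 2 * ∑ k, w k = τ * (τ * ∑ k, w k) := by ring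
      _ ≤ τ := mul_le_of_le_one_right hτ hτγ
      _ ≤ _ := hτA _ _
  obtain ⟨⟨-, hoff⟩, hwdd⟩ := ihS _ hSchurU hSchur_pd
  rw [hSchur_inv] at hoff hwdd
  refine ⟨fun j hj i hij => ?_, fun i hi => ?_⟩
  · by_cases hi : i ∈ S
    · exact hoff ⟨i, hi⟩ ⟨j, hj⟩ fun h => hij (congrArg Subtype.val h)
    · have hσ : 0 ≤ ∑ k ∈ S, A⁻¹ k j := by
        rw [← Finset.sum_coe_sort]
        refine (hwdd ⟨j, hj⟩).trans_eq (Finset.sum_congr rfl fun k _ => ?_)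
        exact (hA.inv.isHermitian.apply j k).symm.trans (star_trivial _)
      have hf : ∀ k ∉ S, (Pi.single j 1 : κ → ℝ) k = 0 := fun k hk =>
        Pi.single_eq_of_ne (fun h : k = j => hk (h ▸ hj)) _
      have hcol := apply_compl_eq_of_mulVec_eq hcross hC (mulVec_col_inv hAdet j) hf
        ⟨i, Finset.mem_compl.2 hi⟩
      simp only [col_apply] at hcol
      rw [hcol]
      exact mul_nonpos_of_nonpos_of_nonneg (by linarith [mul_nonneg hτ hσ]) (hw _)
  · rw [sum_inv_apply_eq_blockSchur hcross hC hAdet ⟨i, hi⟩, mulVec_one_apply, hSchur_inv]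
    exact mul_nonneg (by linarith) (hwdd _)

end ConstantCrossBlock

theorem IsUltra.exists_isConstOffBlocks {κ : Type*} [Fintype κ] [DecidableEq κ] [Nontrivial κ]
    {A : Matrix κ κ ℝ} (hU : IsUltra A) (hsymm : A.IsSymm) :
    ∃ (S : Finset κ) (τ : ℝ), 0 ≤ τ ∧ (∀ i j, τ ≤ A i j) ∧ S.Nonempty ∧ Sᶜ.Nonempty ∧
      IsConstOffBlocks A S τ := by
  obtain ⟨a, b, hab⟩ := exists_pair_ne κ
  obtain ⟨p, hp, hmin⟩ := Finset.exists_min_image (univ.filter fun p : κ × κ => p.1 ≠ p.2)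
    (fun p => A p.1 p.2) ⟨(a, b), by simpa using hab⟩
  set τ := A p.1 p.2
  have hp : p.1 ≠ p.2 := (Finset.mem_filter.1 hp).2
  have hτA : ∀ i j, τ ≤ A i j := by
    intro i j
    rcases eq_or_ne i j with rfl | hij
    · obtain ⟨k, hk⟩ := exists_ne i
      exact (hmin (i, k) (by simpa using hk.symm)).trans (hU.2.1 i k)
    · exact hmin (i, j) (by simpa using hij)
  set S := univ.filter fun k => k = p.1 ∨ τ < A p.1 k
  have hnotS : ∀ k ∉ S, A p.1 k = τ := fun k hk => by
    simp only [S, Finset.mem_filter, Finset.mem_univ, true_and, not_or, not_lt] at hk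
    exact le_antisymm hk.2 (hτA _ _)
  have hcross : ∀ i ∈ S, ∀ k ∉ S, A i k = τ := by
    intro i hi k hk
    simp only [S, Finset.mem_filter, Finset.mem_univ, true_and] at hi
    rcases hi with rfl | hi
    · exact hnotS k hk
    · refine le_antisymm ?_ (hτA _ _)
      have := hU.2.2 p.1 k i
      rw [hnotS k hk] at this
      exact (min_le_iff.1 this).resolve_left hi.not_ge
  refine ⟨S, τ, hU.1 _ _, hτA, ⟨p.1, by simp [S]⟩, ⟨p.2, ?_⟩, fun i k hik => ?_⟩
  · simp [S, hp.symm, τ]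
  · by_cases hi : i ∈ S
    · exact hcross i hi k (hik.1 hi)
    · rw [← hsymm.apply]
      exact hcross k (not_not.1 (mt hik.2 hi)) i hi

theorem IsUltra.isStieltjes_inv_and_isWDD_inv {κ : Type*} [Fintype κ] [DecidableEq κ]
    {A : Matrix κ κ ℝ} (hU : IsUltra A) (hA : A.PosDef) : IsStieltjes A⁻¹ ∧ IsWDD A⁻¹ := by
  refine Fintype.induction_subsingleton_or_nontrivial (P := fun κ _ => ∀ [DecidableEq κ]
    (A : Matrix κ κ ℝ), IsUltra A → A.PosDef → IsStieltjes A⁻¹ ∧ IsWDD A⁻¹) κ ?_ ?_ A hU hA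
  · intro κ _ _ _ A _ hA
    refine ⟨⟨hA.inv, fun i j hij => absurd (Subsingleton.elim i j) hij⟩, fun i => ?_⟩
    rw [Fintype.sum_subsingleton _ i]
    exact hA.inv.diag_pos.le
  · intro κ _ _ ih _ A hU hA
    obtain ⟨S, τ, hτ, hτA, hS, hSc, hcross⟩ :=
      hU.exists_isConstOffBlocks (isHermitian_iff_isSymm.1 hA.isHermitian)
    have hcard : ∀ s : Finset κ, sᶜ.Nonempty → Fintype.card s < Fintype.card κ := by
      rintro s ⟨k, hk⟩
      exact Fintype.card_subtype_lt (Finset.mem_compl.1 hk)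
    have hS' : Sᶜᶜ.Nonempty := by rwa [compl_compl]
    have hSc' : Sᶜᶜᶜ.Nonempty := by rwa [compl_compl]
    obtain ⟨hcolS, hsumS⟩ := inv_col_nonpos_and_sum_nonneg_of_block hA hU hτ hτA hcross hSc
      (fun B hB hBpd => ih _ (hcard S hSc) B hB hBpd)
      (fun B hB hBpd => ih _ (hcard Sᶜ hS') B hB hBpd)
    obtain ⟨hcolSc, hsumSc⟩ := inv_col_nonpos_and_sum_nonneg_of_block hA hU hτ hτA hcross.compl hS'
      (fun B hB hBpd => ih _ (hcard Sᶜ hS') B hB hBpd)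
      (fun B hB hBpd => ih _ (hcard Sᶜᶜ hSc') B hB hBpd)
    refine ⟨⟨hA.inv, fun i j hij => ?_⟩, fun i => ?_⟩
    · by_cases hj : j ∈ S
      exacts [hcolS j hj i hij, hcolSc j (Finset.mem_compl.2 hj) i hij]
    · by_cases hi : i ∈ S
      exacts [hsumS i hi, hsumSc i (Finset.mem_compl.2 hi)]

theorem isUltra_of_isNonblocking {ι : Type*} [DecidableEq ι] {A : Matrix ι ι ℝ}
    (hsymm : A.IsSymm) (hnn : ∀ i j, 0 ≤ A i j) (hpw : PWDD A)
    (hnb : ∀ s : Finset ι, s.card = 3 → IsNonblocking (subMat A s)) : IsUltra A := by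
  refine ⟨hnn, hpw, fun i j k => ?_⟩
  rcases eq_or_ne k i with rfl | hki
  · exact min_le_right _ _
  rcases eq_or_ne k j with rfl | hkj
  · exact min_le_left _ _
  rcases eq_or_ne i j with rfl | hij
  · exact (min_le_left _ _).trans (hpw i k)
  obtain ⟨r, hrk, hr⟩ := hnb {i, j, k}
    (Finset.card_eq_three.2 ⟨i, j, k, hij, hki.symm, hkj.symm, rfl⟩) ⟨k, by simp⟩
  have hr_mem := r.2
  simp only [Finset.mem_insert, Finset.mem_singleton] at hr_mem
  rcases hr_mem with h | h | h
  · have : A i k ≤ A i j := by simpa [subMat, h] using hr ⟨j, by simp⟩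
    exact (min_le_left _ _).trans this
  · have : A j k ≤ A j i := by simpa [subMat, h] using hr ⟨i, by simp⟩
    calc min (A i k) (A k j) ≤ A k j := min_le_right _ _
      _ = A j k := hsymm.apply j k
      _ ≤ A j i := this
      _ = A i j := hsymm.apply i j
  · exact absurd (Subtype.ext h) hrk

section Simplex

variable {n : ℕ} {v : Fin (n + 1) → EuclideanSpace ℝ (Fin n)}

theorem posDef_vGram (hv : AffineIndependent ℝ v) (ℓ : Fin (n + 1)) : (vGram v ℓ).PosDef := by
  have hli : LinearIndependent ℝ fun i : {k // k ≠ ℓ} => v i -ᵥ v ℓ :=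
    (affineIndependent_iff_linearIndependent_vsub ℝ v ℓ).1 hv
  exact posDef_gram_of_linearIndependent hli

theorem isUltra_vGram
    (htri : ∀ i j k : Fin (n + 1), i ≠ j → i ≠ k → j ≠ k → 0 ≤ ⟪v j - v i, v k - v i⟫)
    (hnb : ∀ ℓ (s : Finset {x : Fin (n + 1) // x ≠ ℓ}), s.card = 3 →
      IsNonblocking (subMat (vGram v ℓ) s)) (ℓ : Fin (n + 1)) : IsUltra (vGram v ℓ) := by
  refine isUltra_of_isNonblocking (IsSymm.ext fun i j => real_inner_comm (v i - v ℓ) _)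
    (fun i j => ?_) (fun i j => ?_) (hnb ℓ)
  · rcases eq_or_ne i j with rfl | hij
    · exact real_inner_self_nonneg (x := v i - v ℓ)
    · exact htri ℓ i j (Ne.symm i.2) (Ne.symm j.2) (Subtype.coe_injective.ne hij)
  · rcases eq_or_ne i j with rfl | hij
    · exact le_rfl
    have h := htri i ℓ j i.2 (Subtype.coe_injective.ne hij) (Ne.symm j.2)
    simp only [vGram, of_apply]
    rw [← sub_nonneg, ← inner_sub_right, ← inner_neg_neg]
    convert h using 2 <;> abel

end Simplex

theorem stmt11_general (n : ℕ) (v : Fin (n + 1) → EuclideanSpace ℝ (Fin n))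
    (hv : AffineIndependent ℝ v)
    (htri : ∀ i j k : Fin (n + 1), i ≠ j → i ≠ k → j ≠ k →
      0 ≤ ⟪v j - v i, v k - v i⟫)
    (hnb : ∀ ℓ (s : Finset {x : Fin (n + 1) // x ≠ ℓ}), s.card = 3 →
      IsNonblocking (subMat (vGram v ℓ) s)) :
    ∀ ℓ, IsStieltjes (vGram v ℓ)⁻¹ ∧ IsWDD (vGram v ℓ)⁻¹ := fun ℓ =>
  (isUltra_vGram htri hnb ℓ).isStieltjes_inv_and_isWDD_inv (posDef_vGram hv ℓ)

theorem stmt11 (n : ℕ) (hn : 2 ≤ n) (v : Fin (n + 1) → EuclideanSpace ℝ (Fin n))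
    (hv : AffineIndependent ℝ v)
    (htri : ∀ i j k : Fin (n + 1), i ≠ j → i ≠ k → j ≠ k →
      0 ≤ ⟪v j - v i, v k - v i⟫)
    (hnb : ∀ ℓ (s : Finset {x : Fin (n + 1) // x ≠ ℓ}), s.card = 3 →
      IsNonblocking (subMat (vGram v ℓ) s)) :
    ∀ ℓ, IsStieltjes (vGram v ℓ)⁻¹ ∧ IsWDD (vGram v ℓ)⁻¹ :=
  stmt11_general n v hv htri hnb
end
end

section
/- Let n ≥ 2 and let v_0,…,v_n be affinely independent points in ℝ^n forming an n-simplex S such that ⟨v_j − v_i, v_k − v_i⟩ ≥ 0 for all pairwise distinct i, j, k (all triangular faces of S are nonobtuse), and for each j let q_j be an inward normal to the facet F_j. Then for each i ∈ {0,…,n} there are at most n−2 indices j ≠ i with ⟨q_i, q_j⟩ > 0 (each facet makes an obtuse dihedral angle with at most n−2 of the remaining n facets); consequently the number of unordered pairs {i, j} with ⟨q_i, q_j⟩ > 0 is at most ⌊(n+1)(n−2)/2⌋. -/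
open Matrix Finset
open scoped RealInnerProductSpace

noncomputable section

/-- Auxiliary: each facet has at least two nonobtuse dihedral-angle partners. -/
lemma key_two (n : ℕ) (hn : 2 ≤ n) (v : Fin (n + 1) → EuclideanSpace ℝ (Fin n))
    (hv : AffineIndependent ℝ v)
    (htri : ∀ i j k : Fin (n + 1), i ≠ j → i ≠ k → j ≠ k →
      0 ≤ ⟪v j - v i, v k - v i⟫)
    (q : Fin (n + 1) → EuclideanSpace ℝ (Fin n)) (hq : ∀ j, IsInwardNormal v j (q j))
    (i : Fin (n + 1)) :
    ∃ m j : Fin (n + 1), m ≠ i ∧ j ≠ i ∧ m ≠ j ∧ ⟪q i, q m⟫ ≤ 0 ∧ ⟪q i, q j⟫ ≤ 0 := by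
  classical
  have hli : LinearIndependent ℝ fun k : {x : Fin (n+1) // x ≠ i} => v k.1 - v i := by
    have := (affineIndependent_iff_linearIndependent_vsub ℝ v i).mp hv
    simpa [vsub_eq_sub] using this
  have hcard : Fintype.card {x : Fin (n+1) // x ≠ i} = n := by
    simp [Fintype.card_subtype_compl]
  have hnt : Nontrivial {x : Fin (n+1) // x ≠ i} :=
    Fintype.one_lt_card_iff_nontrivial.mp (by omega)
  have hb : Fintype.card {x : Fin (n+1) // x ≠ i} = Module.finrank ℝ (EuclideanSpace ℝ (Fin n)) := by
    rw [hcard, finrank_euclideanSpace_fin]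
  let B := basisOfLinearIndependentOfCardEqFinrank hli hb
  set μ : {x : Fin (n+1) // x ≠ i} → ℝ := fun k => B.repr (q i) k with hμ
  have hBk : ∀ k, B k = v k.1 - v i := fun k =>
    congrFun (coe_basisOfLinearIndependentOfCardEqFinrank hli hb) k
  have hrep : ∑ k, μ k • (v k.1 - v i) = q i := by
    have h := B.sum_repr (q i)
    calc ∑ k, μ k • (v k.1 - v i) = ∑ k, B.repr (q i) k • B k := by
          refine Finset.sum_congr rfl fun k _ => by rw [hBk k]
      _ = q i := h
  have hexp : ∀ w : EuclideanSpace ℝ (Fin n),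
      ⟪q i, w⟫ = ∑ k, μ k * ⟪v k.1 - v i, w⟫ := by
    intro w
    rw [show ⟪q i, w⟫ = ⟪∑ k, μ k • (v k.1 - v i), w⟫ by rw [hrep], sum_inner]
    exact Finset.sum_congr rfl fun k _ => real_inner_smul_left _ _ _
  obtain ⟨j0⟩ := (inferInstance : Nonempty {x : Fin (n+1) // x ≠ i})
  set t : ℝ := ⟪q i, v i - v j0.1⟫ with hT
  have ht : 0 < t := (hq i).2.2 j0.1 j0.2
  have hconst : ∀ k : {x : Fin (n+1) // x ≠ i}, ⟪v k.1 - v i, q i⟫ = -t := by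
    intro k
    have e1 : ⟪q i, v i - v k.1⟫ = t := by
      rw [hT, show v i - v j0.1 = (v i - v k.1) + (v k.1 - v j0.1) from
        (sub_add_sub_cancel _ _ _).symm, inner_add_right,
        (hq i).2.1 _ _ k.2 j0.2, add_zero]
    rw [real_inner_comm, ← neg_sub (v i) (v k.1), inner_neg_right, e1]
  have hQQ : 0 < ⟪q i, q i⟫ := by
    rw [real_inner_self_eq_norm_sq]
    exact pow_pos (norm_pos_iff.mpr (hq i).1) 2
  have h1 : ⟪q i, q i⟫ = (∑ k, μ k) * (-t) := by
    rw [hexp (q i), Finset.sum_mul]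
    exact Finset.sum_congr rfl fun k _ => by rw [hconst k]
  have hsum : ∑ k, μ k < 0 := by nlinarith
  have hpos : ∀ j : {x : Fin (n+1) // x ≠ i}, 0 < ⟪v j.1 - v i, q j.1⟫ := by
    intro j
    rw [real_inner_comm]
    exact (hq j.1).2.2 i (Ne.symm j.2)
  have hsign : ∀ j : {x : Fin (n+1) // x ≠ i},
      ⟪q i, q j.1⟫ = μ j * ⟪v j.1 - v i, q j.1⟫ := by
    intro j
    rw [hexp (q j.1)]
    refine Finset.sum_eq_single j (fun k _ hkj => ?_) (fun h => absurd (Finset.mem_univ j) h)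
    have h0 : ⟪q j.1, v k.1 - v i⟫ = 0 :=
      (hq j.1).2.1 k.1 i (Subtype.coe_injective.ne hkj) (Ne.symm j.2)
    rw [real_inner_comm, h0, mul_zero]
  obtain ⟨m, -, hm⟩ := Finset.exists_lt_of_sum_lt
    (show ∑ k, μ k < ∑ _k : {x : Fin (n+1) // x ≠ i}, (0:ℝ) by simpa using hsum)
  by_cases hex : ∃ j' : {x : Fin (n+1) // x ≠ i}, j' ≠ m ∧ μ j' ≤ 0
  · obtain ⟨j', hj'm, hj'⟩ := hex
    refine ⟨m.1, j'.1, m.2, j'.2, fun h => hj'm (Subtype.ext h.symm), ?_, ?_⟩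
    · rw [hsign m]; nlinarith [hpos m]
    · rw [hsign j']; nlinarith [hpos j']
  · exfalso
    push_neg at hex
    obtain ⟨j, hjm⟩ := exists_ne m
    have hμj : 0 < μ j := hex j hjm
    have hmj : m.1 ≠ j.1 := fun h => hjm (Subtype.ext h.symm)
    have hid : (0:ℝ) = ∑ k, μ k * ⟪v k.1 - v i, v m.1 - v j.1⟫ := by
      rw [← hexp]; exact ((hq i).2.1 m.1 j.1 m.2 j.2).symm
    have hsplit : ∀ k : {x : Fin (n+1) // x ≠ i}, ⟪v k.1 - v i, v m.1 - v j.1⟫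
        = ⟪v k.1 - v m.1, v m.1 - v j.1⟫ + ⟪v m.1 - v i, v m.1 - v j.1⟫ := by
      intro k
      rw [← inner_add_left, sub_add_sub_cancel]
    have hid2 : (0:ℝ) = (∑ k, μ k * ⟪v k.1 - v m.1, v m.1 - v j.1⟫)
        + (∑ k, μ k) * ⟪v m.1 - v i, v m.1 - v j.1⟫ := by
      rw [hid, Finset.sum_mul, ← Finset.sum_add_distrib]
      exact Finset.sum_congr rfl fun k _ => by rw [hsplit k]; ring
    have hY : 0 ≤ ⟪v m.1 - v i, v m.1 - v j.1⟫ := by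
      have h := htri m.1 i j.1 m.2 hmj (Ne.symm j.2)
      have e : ⟪v m.1 - v i, v m.1 - v j.1⟫ = ⟪v i - v m.1, v j.1 - v m.1⟫ := by
        rw [← inner_neg_neg, neg_sub, neg_sub]
      rw [e]; exact h
    have hfj : μ j * ⟪v j.1 - v m.1, v m.1 - v j.1⟫ < 0 := by
      have hvne : v j.1 ≠ v m.1 := hv.injective.ne (Subtype.coe_injective.ne hjm)
      have e : ⟪v j.1 - v m.1, v m.1 - v j.1⟫ = -⟪v j.1 - v m.1, v j.1 - v m.1⟫ := by
        rw [← inner_neg_right, neg_sub]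
      have hp2 : 0 < ⟪v j.1 - v m.1, v j.1 - v m.1⟫ := by
        rw [real_inner_self_eq_norm_sq]
        exact pow_pos (norm_pos_iff.mpr (sub_ne_zero.mpr hvne)) 2
      rw [e]; nlinarith
    have hfk : ∀ k : {x : Fin (n+1) // x ≠ i}, μ k * ⟪v k.1 - v m.1, v m.1 - v j.1⟫
        ≤ (if k = j then μ j * ⟪v j.1 - v m.1, v m.1 - v j.1⟫ else 0) := by
      intro k
      by_cases hkj : k = j
      · subst hkj; simp
      · simp only [hkj, if_false]
        by_cases hkm : k = m
        · subst hkm; simp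
        · have h1 : 0 < μ k := hex k hkm
          have h2 : 0 ≤ ⟪v k.1 - v m.1, v j.1 - v m.1⟫ :=
            htri m.1 k.1 j.1 (fun h => hkm (Subtype.ext h.symm)) hmj
              (Subtype.coe_injective.ne hkj)
          have e : ⟪v k.1 - v m.1, v m.1 - v j.1⟫ = -⟪v k.1 - v m.1, v j.1 - v m.1⟫ := by
            rw [← inner_neg_right, neg_sub]
          rw [e]; nlinarith
    have hA : (∑ k, μ k * ⟪v k.1 - v m.1, v m.1 - v j.1⟫) < 0 := by
      calc (∑ k, μ k * ⟪v k.1 - v m.1, v m.1 - v j.1⟫)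
          ≤ ∑ k : {x : Fin (n+1) // x ≠ i},
            (if k = j then μ j * ⟪v j.1 - v m.1, v m.1 - v j.1⟫ else 0) :=
            Finset.sum_le_sum fun k _ => hfk k
        _ = μ j * ⟪v j.1 - v m.1, v m.1 - v j.1⟫ := by simp
        _ < 0 := hfj
    nlinarith

theorem stmt13 (n : ℕ) (hn : 2 ≤ n) (v : Fin (n + 1) → EuclideanSpace ℝ (Fin n))
    (hv : AffineIndependent ℝ v)
    (htri : ∀ i j k : Fin (n + 1), i ≠ j → i ≠ k → j ≠ k →
      0 ≤ ⟪v j - v i, v k - v i⟫)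
    (q : Fin (n + 1) → EuclideanSpace ℝ (Fin n)) (hq : ∀ j, IsInwardNormal v j (q j)) :
    (∀ i : Fin (n + 1), {j | j ≠ i ∧ 0 < ⟪q i, q j⟫}.ncard ≤ n - 2) ∧
    {p : Fin (n + 1) × Fin (n + 1) | p.1 < p.2 ∧ 0 < ⟪q p.1, q p.2⟫}.ncard ≤
      (n + 1) * (n - 2) / 2 := by
  
  have key : ∀ i : Fin (n+1), ∃ m j : Fin (n + 1),
      m ≠ i ∧ j ≠ i ∧ m ≠ j ∧ ⟪q i, q m⟫ ≤ 0 ∧ ⟪q i, q j⟫ ≤ 0 :=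
    key_two n hn v hv htri q hq
  classical
  set F : Fin (n+1) → Finset (Fin (n+1)) :=
    fun i => Finset.univ.filter fun j => j ≠ i ∧ 0 < ⟪q i, q j⟫ with hF
  have hFcard : ∀ i, (F i).card ≤ n - 2 := by
    intro i
    obtain ⟨m, j, hmi, hji, hmj, hm, hj⟩ := key i
    have hsub : F i ⊆ ((Finset.univ.erase i).erase m).erase j := by
      intro x hx
      rw [hF, Finset.mem_filter] at hx
      refine Finset.mem_erase.mpr ⟨?_, Finset.mem_erase.mpr ⟨?_,
        Finset.mem_erase.mpr ⟨hx.2.1, Finset.mem_univ x⟩⟩⟩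
      · rintro rfl; exact absurd hx.2.2 (not_lt.mpr hj)
      · rintro rfl; exact absurd hx.2.2 (not_lt.mpr hm)
    have hm' : m ∈ Finset.univ.erase i := by simp [hmi]
    have hj' : j ∈ (Finset.univ.erase i).erase m := by simp [hji, hmj.symm, Ne.symm hmj]
    calc (F i).card ≤ _ := Finset.card_le_card hsub
      _ ≤ n - 2 := by
        rw [Finset.card_erase_of_mem hj', Finset.card_erase_of_mem hm',
          Finset.card_erase_of_mem (Finset.mem_univ i), Finset.card_univ, Fintype.card_fin]
        omega
  constructor
  · intro i
    have hset : {j | j ≠ i ∧ 0 < ⟪q i, q j⟫} = ↑(F i) := by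
      ext x; simp [hF]
    rw [hset, Set.ncard_coe_finset]
    exact hFcard i
  · set P := Finset.univ.filter
      (fun p : Fin (n+1) × Fin (n+1) => p.1 < p.2 ∧ 0 < ⟪q p.1, q p.2⟫) with hP
    have hPset : {p : Fin (n + 1) × Fin (n + 1) | p.1 < p.2 ∧ 0 < ⟪q p.1, q p.2⟫} = ↑P := by
      ext p; simp [hP]
    rw [hPset, Set.ncard_coe_finset]
    set D := Finset.univ.filter
      (fun p : Fin (n+1) × Fin (n+1) => p.1 ≠ p.2 ∧ 0 < ⟪q p.1, q p.2⟫) with hD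
    have hDsum : D.card = ∑ i : Fin (n+1), (F i).card := by
      rw [Finset.card_eq_sum_card_fiberwise
        (f := Prod.fst) (t := Finset.univ) (fun x _ => Finset.mem_univ _)]
      refine Finset.sum_congr rfl fun i _ => ?_
      refine Finset.card_bij' (fun p _ => p.2) (fun j _ => (i, j)) ?_ ?_ ?_ ?_
      · intro p hp
        rw [Finset.mem_filter, hD, Finset.mem_filter] at hp
        obtain ⟨⟨-, h1, h2⟩, h3⟩ := hp
        rw [hF, Finset.mem_filter]
        subst h3
        exact ⟨Finset.mem_univ _, Ne.symm h1, h2⟩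
      · intro j hj
        rw [hF, Finset.mem_filter] at hj
        rw [Finset.mem_filter, hD, Finset.mem_filter]
        exact ⟨⟨Finset.mem_univ _, Ne.symm hj.2.1, hj.2.2⟩, rfl⟩
      · intro p hp
        rw [Finset.mem_filter] at hp
        simp [Prod.ext_iff, hp.2]
      · intro j _; rfl
    have hQP : (Finset.univ.filter
        (fun p : Fin (n+1) × Fin (n+1) => p.2 < p.1 ∧ 0 < ⟪q p.1, q p.2⟫)).card = P.card := by
      refine Finset.card_bij' (fun p _ => (p.2, p.1)) (fun p _ => (p.2, p.1)) ?_ ?_ ?_ ?_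
      · intro p hp
        rw [Finset.mem_filter] at hp
        rw [hP, Finset.mem_filter]
        exact ⟨Finset.mem_univ _, hp.2.1, by rw [real_inner_comm]; exact hp.2.2⟩
      · intro p hp
        rw [hP, Finset.mem_filter] at hp
        rw [Finset.mem_filter]
        exact ⟨Finset.mem_univ _, hp.2.1, by rw [real_inner_comm]; exact hp.2.2⟩
      · intro p _; rfl
      · intro p _; rfl
    have hD2 : D.card = 2 * P.card := by
      have hunion : D = P ∪ Finset.univ.filter
          (fun p : Fin (n+1) × Fin (n+1) => p.2 < p.1 ∧ 0 < ⟪q p.1, q p.2⟫) := by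
        ext p
        simp only [hD, hP, Finset.mem_union, Finset.mem_filter, Finset.mem_univ, true_and]
        constructor
        · rintro ⟨h1, h2⟩
          rcases lt_or_gt_of_ne h1 with h | h
          exacts [Or.inl ⟨h, h2⟩, Or.inr ⟨h, h2⟩]
        · rintro (⟨h1, h2⟩ | ⟨h1, h2⟩)
          exacts [⟨ne_of_lt h1, h2⟩, ⟨ne_of_gt h1, h2⟩]
      have hdisj : Disjoint P (Finset.univ.filter
          (fun p : Fin (n+1) × Fin (n+1) => p.2 < p.1 ∧ 0 < ⟪q p.1, q p.2⟫)) := by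
        rw [Finset.disjoint_left]
        intro p hp hq'
        rw [hP, Finset.mem_filter] at hp
        rw [Finset.mem_filter] at hq'
        exact absurd (hp.2.1.trans hq'.2.1) (lt_irrefl _)
      rw [hunion, Finset.card_union_of_disjoint hdisj, hQP, two_mul]
    have hle : 2 * P.card ≤ (n + 1) * (n - 2) := by
      rw [← hD2, hDsum]
      calc ∑ i : Fin (n+1), (F i).card ≤ ∑ _i : Fin (n+1), (n - 2) :=
            Finset.sum_le_sum fun i _ => hFcard i
        _ = (n + 1) * (n - 2) := by
            rw [Finset.sum_const, Finset.card_univ, Fintype.card_fin, smul_eq_mul]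
    omega
end
end

section
/- Let A = (a_ij) be a 3×3 symmetric positive definite entrywise nonnegative real matrix each of whose diagonal entries is maximal in its row (a_ii ≥ a_ij for all i, j). Then A is ultrametric if and only if A is nonblocking. -/
open Matrix Finset
open scoped RealInnerProductSpace

noncomputable section

theorem stmt14 (A : Matrix (Fin 3) (Fin 3) ℝ) (hpd : A.PosDef) (hnn : ∀ i j, 0 ≤ A i j)
    (hdiag : ∀ i j, A i j ≤ A i i) :
    IsUltra A ↔ IsNonblocking A := by
  have hsym : ∀ i j, A i j = A j i := fun i j => by
    have := congrFun (congrFun hpd.1 i) j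
    simpa [Matrix.conjTranspose_apply] using this.symm
  have s10 : A 1 0 = A 0 1 := hsym 1 0
  have s20 : A 2 0 = A 0 2 := hsym 2 0
  have s21 : A 2 1 = A 1 2 := hsym 2 1
  have d01 : A 0 1 ≤ A 0 0 := hdiag 0 1
  have d02 : A 0 2 ≤ A 0 0 := hdiag 0 2
  have d10 : A 1 0 ≤ A 1 1 := hdiag 1 0
  have d12 : A 1 2 ≤ A 1 1 := hdiag 1 2
  have d20 : A 2 0 ≤ A 2 2 := hdiag 2 0
  have d21 : A 2 1 ≤ A 2 2 := hdiag 2 1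
  constructor
  · rintro ⟨-, -, hu⟩
    have h0 : A 0 1 ≤ A 0 2 ∨ A 1 2 ≤ A 0 2 := by
      have := hu 0 2 1; rw [min_le_iff] at this
      rcases this with h | h
      · left; linarith
      · right; linarith
    have h1 : A 0 1 ≤ A 1 2 ∨ A 0 2 ≤ A 1 2 := by
      have := hu 1 2 0; rw [min_le_iff] at this
      rcases this with h | h
      · left; linarith
      · right; linarith
    have h2 : A 0 2 ≤ A 0 1 ∨ A 1 2 ≤ A 0 1 := by
      have := hu 0 1 2; rw [min_le_iff] at this
      rcases this with h | h
      · left; linarith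
      · right; linarith
    intro j
    fin_cases j
    · -- column 0: witness row 1 if A 1 0 ≤ A 1 2, else row 2
      rcases h1 with h | h
      · exact ⟨1, by decide, fun k => by fin_cases k <;> simp <;> linarith⟩
      · exact ⟨2, by decide, fun k => by fin_cases k <;> simp <;> linarith⟩
    · rcases h0 with h | h
      · exact ⟨0, by decide, fun k => by fin_cases k <;> simp <;> linarith⟩
      · exact ⟨2, by decide, fun k => by fin_cases k <;> simp <;> linarith⟩
    · rcases h2 with h | h
      · exact ⟨0, by decide, fun k => by fin_cases k <;> simp <;> linarith⟩
      · exact ⟨1, by decide, fun k => by fin_cases k <;> simp <;> linarith⟩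
  · intro hnb
    refine ⟨hnn, hdiag, ?_⟩
    have h2 : A 0 2 ≤ A 0 1 ∨ A 1 2 ≤ A 0 1 := by
      obtain ⟨i, hi, hm⟩ := hnb 2
      fin_cases i
      · left; have h := hm 1; simp at h; linarith
      · right; have h := hm 0; simp at h; linarith
      · exact absurd rfl hi
    have h1 : A 0 1 ≤ A 0 2 ∨ A 1 2 ≤ A 0 2 := by
      obtain ⟨i, hi, hm⟩ := hnb 1
      fin_cases i
      · left; have h := hm 2; simp at h; linarith
      · exact absurd rfl hi
      · right; have h := hm 0; simp at h; linarith
    have h0 : A 0 1 ≤ A 1 2 ∨ A 0 2 ≤ A 1 2 := by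
      obtain ⟨i, hi, hm⟩ := hnb 0
      fin_cases i
      · exact absurd rfl hi
      · left; have h := hm 2; simp at h; linarith
      · right; have h := hm 1; simp at h; linarith
    intro x y z
    fin_cases x <;> fin_cases y <;> fin_cases z <;>
      rw [min_le_iff] <;>
      rcases h0 with h0 | h0 <;> rcases h1 with h1 | h1 <;> rcases h2 with h2 | h2 <;>
      simp <;>
      first
        | (left; linarith)
        | (right; linarith)
end
end

section
/- Let o, p, q, r be affinely independent points in ℝ^3 forming a tetrahedron T all of whose triangular faces are nonobtuse (⟨y − x, z − x⟩ ≥ 0 for all pairwise distinct x, y, z ∈ {o, p, q, r}), and let G_o, G_p, G_q, G_r denote the 3×3 vertex Gramians of T (each entrywise nonnegative). Then each vertex Gramian has at most one blocking column, and the following are equivalent: the column of G_o corresponding to p is a blocking column; the column of G_p corresponding to o is a blocking column; the column of G_r corresponding to q is a blocking column; the column of G_q corresponding to r is a blocking column. -/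
open Matrix Finset
open scoped RealInnerProductSpace

noncomputable section

section AuxStmt17

lemma pol17 {V : Type*} [NormedAddCommGroup V] [InnerProductSpace ℝ V] (x y z : V) :
    2 * ⟪y - x, z - x⟫ = ‖x - y‖ ^ 2 + ‖x - z‖ ^ 2 - ‖y - z‖ ^ 2 := by
  have h := norm_sub_sq_real (y - x) (z - x)
  have h2 : (y - x) - (z - x) = y - z := by abel
  rw [h2] at h
  rw [norm_sub_rev x y, norm_sub_rev x z]
  linarith

lemma exists_fourth17 : ∀ ℓ a b : Fin 4, a ≠ ℓ → b ≠ ℓ → a ≠ b →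
    ∃ t, t ≠ ℓ ∧ t ≠ a ∧ t ≠ b ∧ ∀ k, k = ℓ ∨ k = a ∨ k = b ∨ k = t := by decide

lemma blocking_iff17 {v : Fin 4 → EuclideanSpace ℝ (Fin 3)}
    (htri : ∀ i j k : Fin 4, i ≠ j → i ≠ k → j ≠ k → 0 ≤ ⟪v j - v i, v k - v i⟫)
    (ℓ a b c : Fin 4) (hal : a ≠ ℓ) (hbl : b ≠ ℓ) (hcl : c ≠ ℓ)
    (hab : a ≠ b) (hac : a ≠ c) (hbc : b ≠ c)
    (hcov : ∀ k : Fin 4, k = ℓ ∨ k = a ∨ k = b ∨ k = c) :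
    IsBlockingCol (vGram v ℓ) ⟨a, hal⟩ ↔
      (‖v ℓ - v c‖ ^ 2 + ‖v a - v b‖ ^ 2 < ‖v ℓ - v a‖ ^ 2 + ‖v b - v c‖ ^ 2 ∧
       ‖v ℓ - v b‖ ^ 2 + ‖v a - v c‖ ^ 2 < ‖v ℓ - v a‖ ^ 2 + ‖v b - v c‖ ^ 2) := by
  have hsym : ∀ x y : Fin 4, ‖v x - v y‖ ^ 2 = ‖v y - v x‖ ^ 2 := fun x y => by
    rw [norm_sub_rev]
  constructor
  · intro h
    constructor
    · obtain ⟨k, hk⟩ := h ⟨b, hbl⟩ (fun he => hab.symm (congrArg Subtype.val he))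
      obtain ⟨k1, hk1⟩ := k
      have hk' : ⟪v b - v ℓ, v k1 - v ℓ⟫ < ⟪v b - v ℓ, v a - v ℓ⟫ := hk
      rcases hcov k1 with he | he | he | he <;> rw [he] at hk'
      · exact absurd he hk1
      · exact absurd hk' (lt_irrefl _)
      · have ht := htri b a ℓ hab.symm hbl hal
        have p1 := pol17 (v ℓ) (v b) (v b)
        have p2 := pol17 (v ℓ) (v b) (v a)
        have p3 := pol17 (v b) (v a) (v ℓ)
        have hz : ‖v b - v b‖ ^ 2 = 0 := by simp
        linarith [hsym a ℓ, hsym b ℓ, hsym a b]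
      · have p1 := pol17 (v ℓ) (v b) (v c)
        have p2 := pol17 (v ℓ) (v b) (v a)
        linarith [hsym a b]
    · obtain ⟨k, hk⟩ := h ⟨c, hcl⟩ (fun he => hac.symm (congrArg Subtype.val he))
      obtain ⟨k1, hk1⟩ := k
      have hk' : ⟪v c - v ℓ, v k1 - v ℓ⟫ < ⟪v c - v ℓ, v a - v ℓ⟫ := hk
      rcases hcov k1 with he | he | he | he <;> rw [he] at hk'
      · exact absurd he hk1
      · exact absurd hk' (lt_irrefl _)
      · have p1 := pol17 (v ℓ) (v c) (v b)
        have p2 := pol17 (v ℓ) (v c) (v a)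
        linarith [hsym a c, hsym b c]
      · have ht := htri c a ℓ hac.symm hcl hal
        have p1 := pol17 (v ℓ) (v c) (v c)
        have p2 := pol17 (v ℓ) (v c) (v a)
        have p3 := pol17 (v c) (v a) (v ℓ)
        have hz : ‖v c - v c‖ ^ 2 = 0 := by simp
        linarith [hsym a ℓ, hsym c ℓ, hsym a c]
  · rintro ⟨h1, h2⟩ ⟨i1, hi1⟩ hia
    rcases hcov i1 with he | he | he | he
    · exact absurd he hi1
    · exact absurd (Subtype.ext he) hia
    · refine ⟨⟨c, hcl⟩, ?_⟩
      show ⟪v i1 - v ℓ, v c - v ℓ⟫ < ⟪v i1 - v ℓ, v a - v ℓ⟫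
      rw [he]
      have p1 := pol17 (v ℓ) (v b) (v c)
      have p2 := pol17 (v ℓ) (v b) (v a)
      linarith [hsym a b]
    · refine ⟨⟨b, hbl⟩, ?_⟩
      show ⟪v i1 - v ℓ, v b - v ℓ⟫ < ⟪v i1 - v ℓ, v a - v ℓ⟫
      rw [he]
      have p1 := pol17 (v ℓ) (v c) (v b)
      have p2 := pol17 (v ℓ) (v c) (v a)
      linarith [hsym a c, hsym b c]

end AuxStmt17

theorem stmt17 (v : Fin 4 → EuclideanSpace ℝ (Fin 3)) (hv : AffineIndependent ℝ v)
    (htri : ∀ i j k : Fin 4, i ≠ j → i ≠ k → j ≠ k → 0 ≤ ⟪v j - v i, v k - v i⟫) :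
    (∀ (ℓ : Fin 4) (j j' : {k : Fin 4 // k ≠ ℓ}), IsBlockingCol (vGram v ℓ) j →
      IsBlockingCol (vGram v ℓ) j' → j = j') ∧
    List.TFAE
      [ IsBlockingCol (vGram v 0) ⟨1, by decide⟩,
        IsBlockingCol (vGram v 1) ⟨0, by decide⟩,
        IsBlockingCol (vGram v 3) ⟨2, by decide⟩,
        IsBlockingCol (vGram v 2) ⟨3, by decide⟩ ] := by
  have hsym : ∀ x y : Fin 4, ‖v x - v y‖ ^ 2 = ‖v y - v x‖ ^ 2 := fun x y => by
    rw [norm_sub_rev]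
  constructor
  · intro ℓ j j' hj hj'
    by_contra hne
    have hvne : j.1 ≠ j'.1 := fun h => hne (Subtype.ext h)
    obtain ⟨t, ht1, ht2, ht3, hcov⟩ := exists_fourth17 ℓ j.1 j'.1 j.2 j'.2 hvne
    have e := blocking_iff17 htri ℓ j.1 j'.1 t j.2 j'.2 ht1 hvne (Ne.symm ht2) (Ne.symm ht3) hcov
    have e' := blocking_iff17 htri ℓ j'.1 j.1 t j'.2 j.2 ht1 hvne.symm (Ne.symm ht3) (Ne.symm ht2)
      (fun k => by rcases hcov k with h | h | h | h <;> tauto)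
    have h1 := (e.mp hj).2
    have h2 := (e'.mp hj').2
    linarith
  · have e0 := blocking_iff17 htri 0 1 2 3 (by decide) (by decide) (by decide) (by decide)
      (by decide) (by decide) (by decide)
    have e1 := blocking_iff17 htri 1 0 2 3 (by decide) (by decide) (by decide) (by decide)
      (by decide) (by decide) (by decide)
    have e3 := blocking_iff17 htri 3 2 0 1 (by decide) (by decide) (by decide) (by decide)
      (by decide) (by decide) (by decide)
    have e2 := blocking_iff17 htri 2 3 0 1 (by decide) (by decide) (by decide) (by decide)
      (by decide) (by decide) (by decide)
    tfae_have 1 ↔ 2 := e0.trans (Iff.trans (by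
      constructor <;> rintro ⟨h1, h2⟩ <;>
        exact ⟨by linarith [hsym 0 1, hsym 0 2, hsym 0 3, hsym 1 2, hsym 1 3, hsym 2 3],
               by linarith [hsym 0 1, hsym 0 2, hsym 0 3, hsym 1 2, hsym 1 3, hsym 2 3]⟩) e1.symm)
    tfae_have 1 ↔ 3 := e0.trans (Iff.trans (by
      constructor <;> rintro ⟨h1, h2⟩ <;>
        exact ⟨by linarith [hsym 0 1, hsym 0 2, hsym 0 3, hsym 1 2, hsym 1 3, hsym 2 3],
               by linarith [hsym 0 1, hsym 0 2, hsym 0 3, hsym 1 2, hsym 1 3, hsym 2 3]⟩) e3.symm)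
    tfae_have 1 ↔ 4 := e0.trans (Iff.trans (by
      constructor <;> rintro ⟨h1, h2⟩ <;>
        exact ⟨by linarith [hsym 0 1, hsym 0 2, hsym 0 3, hsym 1 2, hsym 1 3, hsym 2 3],
               by linarith [hsym 0 1, hsym 0 2, hsym 0 3, hsym 1 2, hsym 1 3, hsym 2 3]⟩) e2.symm)
    tfae_finish
end
end

section
/- Let v_0,…,v_4 be affinely independent points in ℝ^4 forming a 4-simplex F all of whose facets (tetrahedral facets) are nonobtuse. Then the following are equivalent: every vertex Gramian of F is nonblocking; every vertex Gramian of F is ultrametric. -/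
open Matrix Finset
open scoped RealInnerProductSpace

noncomputable section

lemma inner_diff {E : Type*} [NormedAddCommGroup E] [InnerProductSpace ℝ E] (x y z w : E) :
    ⟪x - y, z - w⟫ = ⟪x, z⟫ - ⟪x, w⟫ - ⟪y, z⟫ + ⟪y, w⟫ := by
  rw [inner_sub_left, inner_sub_right, inner_sub_right]; ring

lemma fin5_cases : ∀ z : Fin 5, z = 0 ∨ z = 1 ∨ z = 2 ∨ z = 3 ∨ z = 4 := by decide

lemma exists_third : ∀ a b : Fin 5, ∃ c, c ≠ a ∧ c ≠ b := by decide

lemma exists_fifth : ∀ a b c d : Fin 5, a ≠ b → a ≠ c → a ≠ d → b ≠ c → b ≠ d → c ≠ d →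
    ∃ m, m ≠ a ∧ m ≠ b ∧ m ≠ c ∧ m ≠ d := by decide

lemma exists_two_others : ∀ a b c : Fin 5, a ≠ b → a ≠ c → b ≠ c →
    ∃ d e : Fin 5, d ≠ a ∧ d ≠ b ∧ d ≠ c ∧ e ≠ a ∧ e ≠ b ∧ e ≠ c ∧ d ≠ e := by decide

lemma cover5 : ∀ a b c d e : Fin 5, a ≠ b → a ≠ c → a ≠ d → a ≠ e → b ≠ c → b ≠ d → b ≠ e →
    c ≠ d → c ≠ e → d ≠ e → ∀ x : Fin 5, x = a ∨ x = b ∨ x = c ∨ x = d ∨ x = e := by decide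

lemma hull_proj {E : Type*} [NormedAddCommGroup E] [InnerProductSpace ℝ E]
    (va vb vd q : E) (hq : q ∈ convexHull ℝ ({va, vb, vd} : Set E)) :
    ∃ w₂ w₃ : ℝ, 0 ≤ w₂ ∧ 0 ≤ w₃ ∧ w₂ + w₃ ≤ 1 ∧
      q = (1 - w₂ - w₃) • va + w₂ • vb + w₃ • vd := by
  rw [convexHull_insert ⟨vb, Set.mem_insert _ _⟩] at hq
  rw [mem_convexJoin] at hq
  obtain ⟨x, hx, z, hz, hqz⟩ := hq
  rw [Set.mem_singleton_iff] at hx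
  subst hx
  rw [convexHull_pair] at hz
  obtain ⟨t1, t2, ht1, ht2, hts, rfl⟩ := hz
  obtain ⟨s1, s2, hs1, hs2, hss, rfl⟩ := hqz
  refine ⟨s2 * t1, s2 * t2, by positivity, by positivity, by nlinarith, ?_⟩
  have h1 : (1 : ℝ) - s2 * t1 - s2 * t2 = s1 := by nlinarith
  rw [h1]
  module


set_option maxHeartbeats 1000000 in
lemma tri_nonneg (v : Fin 5 → EuclideanSpace ℝ (Fin 4)) (hv : AffineIndependent ℝ v)
    (hfac : FacetsNonobtuse v) : ∀ a b c : Fin 5, 0 ≤ ⟪v b - v a, v c - v a⟫ := by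
  intro a b c
  by_cases hab : a = b
  · subst hab; simp
  by_cases hac : a = c
  · subst hac; simp
  by_cases hbc : b = c
  · subst hbc; exact real_inner_self_nonneg
  obtain ⟨d, e, hda, hdb, hdc, hea, heb, hec, hde⟩ :=
    exists_two_others a b c hab hac hbc
  have hinj := hv.injective
  -- first projection: v c onto triangle {a, b, d}
  obtain ⟨q, hqhull, hqperp⟩ := hfac c e (fun h => hec h.symm)
  have hcov := cover5 a b c d e hab hac (fun h => hda h.symm) (fun h => hea h.symm) hbc
    (fun h => hdb h.symm) (fun h => heb h.symm) (fun h => hdc h.symm)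
    (fun h => hec h.symm) hde
  have hset1 : {k : Fin 5 | k ≠ c ∧ k ≠ e} = {a, b, d} := by
    ext x
    simp only [Set.mem_setOf_eq, Set.mem_insert_iff, Set.mem_singleton_iff]
    constructor
    · rintro ⟨hxc, hxe⟩
      rcases hcov x with rfl | rfl | rfl | rfl | rfl
      · exact Or.inl rfl
      · exact Or.inr (Or.inl rfl)
      · exact absurd rfl hxc
      · exact Or.inr (Or.inr rfl)
      · exact absurd rfl hxe
    · rintro (rfl | rfl | rfl)
      · exact ⟨hac, fun h => hea h.symm⟩
      · exact ⟨hbc, fun h => heb h.symm⟩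
      · exact ⟨hdc, hde⟩
  have him1 : v '' {k : Fin 5 | k ≠ c ∧ k ≠ e} = {v a, v b, v d} := by
    rw [hset1]; simp [Set.image_insert_eq]
  rw [him1] at hqhull
  obtain ⟨w₂, w₃, hw₂, hw₃, hwsum, hqeq⟩ := hull_proj _ _ _ _ hqhull
  -- second projection: v d onto triangle {a, b, c}
  obtain ⟨q', hq'hull, hq'perp⟩ := hfac d e hde
  have hset2 : {k : Fin 5 | k ≠ d ∧ k ≠ e} = {a, b, c} := by
    ext x
    simp only [Set.mem_setOf_eq, Set.mem_insert_iff, Set.mem_singleton_iff]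
    constructor
    · rintro ⟨hxd, hxe⟩
      rcases hcov x with rfl | rfl | rfl | rfl | rfl
      · exact Or.inl rfl
      · exact Or.inr (Or.inl rfl)
      · exact Or.inr (Or.inr rfl)
      · exact absurd rfl hxd
      · exact absurd rfl hxe
    · rintro (rfl | rfl | rfl)
      · exact ⟨fun h => hda h.symm, fun h => hea h.symm⟩
      · exact ⟨fun h => hdb h.symm, fun h => heb h.symm⟩
      · exact ⟨fun h => hdc h.symm, fun h => hec h.symm⟩
  have him2 : v '' {k : Fin 5 | k ≠ d ∧ k ≠ e} = {v a, v b, v c} := by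
    rw [hset2]; simp [Set.image_insert_eq]
  rw [him2] at hq'hull
  obtain ⟨u₂, u₃, hu₂, hu₃, husum, hq'eq⟩ := hull_proj _ _ _ _ hq'hull
  -- memberships
  have has1 : a ∈ {k : Fin 5 | k ≠ c ∧ k ≠ e} := ⟨hac, fun h => hea h.symm⟩
  have hbs1 : b ∈ {k : Fin 5 | k ≠ c ∧ k ≠ e} := ⟨hbc, fun h => heb h.symm⟩
  have hds1 : d ∈ {k : Fin 5 | k ≠ c ∧ k ≠ e} := ⟨hdc, hde⟩
  have has2 : a ∈ {k : Fin 5 | k ≠ d ∧ k ≠ e} := ⟨fun h => hda h.symm, fun h => hea h.symm⟩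
  have hbs2 : b ∈ {k : Fin 5 | k ≠ d ∧ k ≠ e} := ⟨fun h => hdb h.symm, fun h => heb h.symm⟩
  have hcs2 : c ∈ {k : Fin 5 | k ≠ d ∧ k ≠ e} := ⟨fun h => hdc h.symm, fun h => hec h.symm⟩
  -- scalar relations
  have hperp1 : ⟪v b - v a, v c - q⟫ = 0 := by
    rw [real_inner_comm]; exact hqperp b hbs1 a has1
  have hperp2 : ⟪v b - v a, v d - q'⟫ = 0 := by
    rw [real_inner_comm]; exact hq'perp b hbs2 a has2
  have hX : ⟪v b - v a, v c - v a⟫ =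
      w₂ * ⟪v b - v a, v b - v a⟫ + w₃ * ⟪v b - v a, v d - v a⟫ := by
    have h0 : ⟪v b - v a, v c - v a⟫ = ⟪v b - v a, q - v a⟫ := by
      have h1 : v c - v a = (v c - q) + (q - v a) := by abel
      rw [h1, inner_add_right, hperp1, zero_add]
    have h2 : q - v a = w₂ • (v b - v a) + w₃ • (v d - v a) := by
      rw [hqeq]; module
    rw [h0, h2, inner_add_right, real_inner_smul_right, real_inner_smul_right]
  have hY : ⟪v b - v a, v d - v a⟫ =
      u₂ * ⟪v b - v a, v b - v a⟫ + u₃ * ⟪v b - v a, v c - v a⟫ := by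
    have h0 : ⟪v b - v a, v d - v a⟫ = ⟪v b - v a, q' - v a⟫ := by
      have h1 : v d - v a = (v d - q') + (q' - v a) := by abel
      rw [h1, inner_add_right, hperp2, zero_add]
    have h2 : q' - v a = u₂ • (v b - v a) + u₃ • (v c - v a) := by
      rw [hq'eq]; module
    rw [h0, h2, inner_add_right, real_inner_smul_right, real_inner_smul_right]
  -- arithmetic
  by_contra hcon
  push_neg at hcon
  set X := ⟪v b - v a, v c - v a⟫ with hXdef
  set Y := ⟪v b - v a, v d - v a⟫ with hYdef
  set N := ⟪v b - v a, v b - v a⟫ with hNdef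
  have hvba : v b - v a ≠ 0 := sub_ne_zero.2 (fun h => hab (hinj h).symm)
  have hN : 0 < N := by
    rcases lt_or_eq_of_le (real_inner_self_nonneg (x := v b - v a)) with h | h
    · exact h
    · exact absurd (inner_self_eq_zero.mp h.symm) hvba
  have hYneg : Y < 0 := by nlinarith [hX, mul_nonneg hw₂ hN.le]
  have hXY : X = Y := by
    have h1 : Y ≤ X := by
      nlinarith [mul_nonneg hw₂ hN.le, mul_nonneg (by linarith : (0:ℝ) ≤ 1 - w₃) (by linarith : (0:ℝ) ≤ -Y)]
    have h2 : X ≤ Y := by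
      nlinarith [mul_nonneg hu₂ hN.le, mul_nonneg (by linarith : (0:ℝ) ≤ 1 - u₃) (by linarith : (0:ℝ) ≤ -X)]
    linarith
  have hw₃1 : w₃ = 1 := by nlinarith [mul_nonneg hw₂ hN.le]
  have hw₂0 : w₂ = 0 := by nlinarith
  have hu₃1 : u₃ = 1 := by nlinarith [mul_nonneg hu₂ hN.le]
  have hu₂0 : u₂ = 0 := by nlinarith
  have hqd : q = v d := by rw [hqeq, hw₂0, hw₃1]; simp
  have hq'c : q' = v c := by rw [hq'eq, hu₂0, hu₃1]; simp
  have hI1 : ⟪v c - v d, v d - v a⟫ = 0 := by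
    have := hqperp d hds1 a has1
    rwa [hqd] at this
  have hI2 : ⟪v d - v c, v c - v a⟫ = 0 := by
    have := hq'perp c hcs2 a has2
    rwa [hq'c] at this
  have hI3 : ⟪v c - v d, v c - v d⟫ = 0 := by
    have e1 : ⟪v c - v d, v c - v a⟫ = 0 := by
      rw [show v c - v d = -(v d - v c) by abel, inner_neg_left, hI2, neg_zero]
    have e2 : v c - v d = (v c - v a) - (v d - v a) := by abel
    rw [show ⟪v c - v d, v c - v d⟫ = ⟪v c - v d, v c - v a⟫ - ⟪v c - v d, v d - v a⟫ by
      rw [← inner_sub_right, ← e2], e1, hI1, sub_zero]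
  exact hdc ((hinj (sub_eq_zero.mp (inner_self_eq_zero.mp hI3))).symm)

set_option maxHeartbeats 2000000 in
lemma core_min (p : Fin 5 → EuclideanSpace ℝ (Fin 4))
    (htri : ∀ a b c : Fin 5, 0 ≤ ⟪p b - p a, p c - p a⟫)
    (hnb12 : ∃ w : Fin 5, w ≠ 1 ∧ w ≠ 2 ∧ ∀ t : Fin 5, t ≠ 1 →
      ⟪p w - p 1, p 2 - p 1⟫ ≤ ⟪p w - p 1, p t - p 1⟫)
    (hnb03 : ∃ w : Fin 5, w ≠ 0 ∧ w ≠ 3 ∧ ∀ t : Fin 5, t ≠ 0 →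
      ⟪p w - p 0, p 3 - p 0⟫ ≤ ⟪p w - p 0, p t - p 0⟫) :
    min ⟪p 1 - p 0, p 3 - p 0⟫ ⟪p 3 - p 0, p 2 - p 0⟫ ≤ ⟪p 1 - p 0, p 2 - p 0⟫ := by
  set f : Fin 5 → Fin 5 → ℝ := fun a b => ⟪p a, p b⟫ with hf
  have hexp : ∀ a b c : Fin 5, ⟪p b - p a, p c - p a⟫ = f b c - f b a - f a c + f a a :=
    fun a b c => inner_diff _ _ _ _
  have hT : ∀ a b c : Fin 5, 0 ≤ f b c - f b a - f a c + f a a := by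
    intro a b c; have := htri a b c; rwa [hexp] at this
  have hsym : ∀ a b : Fin 5, f a b = f b a := fun a b => real_inner_comm _ _
  rw [hexp 0 1 3, hexp 0 3 2, hexp 0 1 2]
  by_contra hcon
  push_neg at hcon
  rw [lt_min_iff] at hcon
  obtain ⟨h1, h2⟩ := hcon
  obtain ⟨w, hwa, hwb, hw⟩ := hnb12
  have hwf : ∀ t : Fin 5, t ≠ 1 →
      f w 2 - f w 1 - f 1 2 + f 1 1 ≤ f w t - f w 1 - f 1 t + f 1 1 := by
    intro t ht; have := hw t ht; rwa [hexp 1 w 2, hexp 1 w t] at this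
  clear hw
  rcases fin5_cases w with rfl | rfl | rfl | rfl | rfl
  · linarith [hT 0 1 2, hT 0 1 3, hT 0 1 4, hT 0 2 3, hT 0 2 4, hT 0 3 4, hT 1 0 2, hT 1 0 3, hT 1 0 4, hT 1 2 3, hT 1 2 4, hT 1 3 4, hT 2 0 1, hT 2 0 3, hT 2 0 4, hT 2 1 3, hT 2 1 4, hT 2 3 4, hT 3 0 1, hT 3 0 2, hT 3 0 4, hT 3 1 2, hT 3 1 4, hT 3 2 4, hT 4 0 1, hT 4 0 2, hT 4 0 3, hT 4 1 2, hT 4 1 3, hT 4 2 3, hsym 0 1, hsym 0 2, hsym 0 3, hsym 0 4, hsym 1 2, hsym 1 3, hsym 1 4, hsym 2 3, hsym 2 4, hsym 3 4, hwf 0 (by decide), hwf 2 (by decide), hwf 3 (by decide), hwf 4 (by decide), h1, h2]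
  · exact absurd rfl hwa
  · exact absurd rfl hwb
  · linarith [hT 0 1 2, hT 0 1 3, hT 0 1 4, hT 0 2 3, hT 0 2 4, hT 0 3 4, hT 1 0 2, hT 1 0 3, hT 1 0 4, hT 1 2 3, hT 1 2 4, hT 1 3 4, hT 2 0 1, hT 2 0 3, hT 2 0 4, hT 2 1 3, hT 2 1 4, hT 2 3 4, hT 3 0 1, hT 3 0 2, hT 3 0 4, hT 3 1 2, hT 3 1 4, hT 3 2 4, hT 4 0 1, hT 4 0 2, hT 4 0 3, hT 4 1 2, hT 4 1 3, hT 4 2 3, hsym 0 1, hsym 0 2, hsym 0 3, hsym 0 4, hsym 1 2, hsym 1 3, hsym 1 4, hsym 2 3, hsym 2 4, hsym 3 4, hwf 0 (by decide), hwf 2 (by decide), hwf 3 (by decide), hwf 4 (by decide), h1, h2]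
  · obtain ⟨u, hua, hub, hu⟩ := hnb03
    have huf : ∀ t : Fin 5, t ≠ 0 →
        f u 3 - f u 0 - f 0 3 + f 0 0 ≤ f u t - f u 0 - f 0 t + f 0 0 := by
      intro t ht; have := hu t ht; rwa [hexp 0 u 3, hexp 0 u t] at this
    clear hu
    rcases fin5_cases u with rfl | rfl | rfl | rfl | rfl
    · exact absurd rfl hua
    · linarith [hT 0 1 2, hT 0 1 3, hT 0 1 4, hT 0 2 3, hT 0 2 4, hT 0 3 4, hT 1 0 2, hT 1 0 3, hT 1 0 4, hT 1 2 3, hT 1 2 4, hT 1 3 4, hT 2 0 1, hT 2 0 3, hT 2 0 4, hT 2 1 3, hT 2 1 4, hT 2 3 4, hT 3 0 1, hT 3 0 2, hT 3 0 4, hT 3 1 2, hT 3 1 4, hT 3 2 4, hT 4 0 1, hT 4 0 2, hT 4 0 3, hT 4 1 2, hT 4 1 3, hT 4 2 3, hsym 0 1, hsym 0 2, hsym 0 3, hsym 0 4, hsym 1 2, hsym 1 3, hsym 1 4, hsym 2 3, hsym 2 4, hsym 3 4, hwf 0 (by decide), hwf 2 (by decide), hwf 3 (by decide), hwf 4 (by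 decide), huf 1 (by decide), huf 2 (by decide), huf 3 (by decide), huf 4 (by decide), h1, h2]
    · linarith [hT 0 1 2, hT 0 1 3, hT 0 1 4, hT 0 2 3, hT 0 2 4, hT 0 3 4, hT 1 0 2, hT 1 0 3, hT 1 0 4, hT 1 2 3, hT 1 2 4, hT 1 3 4, hT 2 0 1, hT 2 0 3, hT 2 0 4, hT 2 1 3, hT 2 1 4, hT 2 3 4, hT 3 0 1, hT 3 0 2, hT 3 0 4, hT 3 1 2, hT 3 1 4, hT 3 2 4, hT 4 0 1, hT 4 0 2, hT 4 0 3, hT 4 1 2, hT 4 1 3, hT 4 2 3, hsym 0 1, hsym 0 2, hsym 0 3, hsym 0 4, hsym 1 2, hsym 1 3, hsym 1 4, hsym 2 3, hsym 2 4, hsym 3 4, hwf 0 (by decide), hwf 2 (by decide), hwf 3 (by decide), hwf 4 (by decide), huf 1 (by decide), huf 2 (by decide), huf 3 (by decide), huf 4 (by decide), h1, h2]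
    · exact absurd rfl hub
    · linarith [hT 0 1 2, hT 0 1 3, hT 0 1 4, hT 0 2 3, hT 0 2 4, hT 0 3 4, hT 1 0 2, hT 1 0 3, hT 1 0 4, hT 1 2 3, hT 1 2 4, hT 1 3 4, hT 2 0 1, hT 2 0 3, hT 2 0 4, hT 2 1 3, hT 2 1 4, hT 2 3 4, hT 3 0 1, hT 3 0 2, hT 3 0 4, hT 3 1 2, hT 3 1 4, hT 3 2 4, hT 4 0 1, hT 4 0 2, hT 4 0 3, hT 4 1 2, hT 4 1 3, hT 4 2 3, hsym 0 1, hsym 0 2, hsym 0 3, hsym 0 4, hsym 1 2, hsym 1 3, hsym 1 4, hsym 2 3, hsym 2 4, hsym 3 4, hwf 0 (by decide), hwf 2 (by decide), hwf 3 (by decide), hwf 4 (by decide), huf 1 (by decide), huf 2 (by decide), huf 3 (by decide), huf 4 (by decide), h1, h2]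


lemma ultra_to_nonblocking (v : Fin 5 → EuclideanSpace ℝ (Fin 4)) (ℓ : Fin 5)
    (hu : IsUltra (vGram v ℓ)) : IsNonblocking (vGram v ℓ) := by
  intro j
  obtain ⟨c, hc1, hc2⟩ := exists_third ℓ j.1
  have hne : (Finset.univ.erase j).Nonempty :=
    ⟨⟨c, hc1⟩, Finset.mem_erase.2 ⟨fun h => hc2 (congrArg Subtype.val h), Finset.mem_univ _⟩⟩
  obtain ⟨i, himem, hmin⟩ := Finset.exists_min_image _ (fun i => vGram v ℓ i j) hne
  refine ⟨i, (Finset.mem_erase.1 himem).1, fun k => ?_⟩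
  by_cases hkj : k = j
  · subst hkj; exact le_refl _
  have h1 := hu.2.2 i k j
  have h2 := hmin k (Finset.mem_erase.2 ⟨hkj, Finset.mem_univ _⟩)
  have h3 : vGram v ℓ j k = vGram v ℓ k j := by
    show ⟪v j.1 - v ℓ, v k.1 - v ℓ⟫ = ⟪v k.1 - v ℓ, v j.1 - v ℓ⟫
    exact real_inner_comm _ _
  calc vGram v ℓ i j ≤ min (vGram v ℓ i j) (vGram v ℓ j k) :=
        le_min (le_refl _) (by rw [h3]; exact h2)
    _ ≤ vGram v ℓ i k := h1

theorem stmt18 (v : Fin 5 → EuclideanSpace ℝ (Fin 4)) (hv : AffineIndependent ℝ v)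
    (hfac : FacetsNonobtuse v) :
    (∀ ℓ, IsNonblocking (vGram v ℓ)) ↔ (∀ ℓ, IsUltra (vGram v ℓ)) := by
  have htri := tri_nonneg v hv hfac
  constructor
  · intro hnb ℓ
    have hdiag : ∀ i j : {k : Fin 5 // k ≠ ℓ}, vGram v ℓ i j ≤ vGram v ℓ i i := by
      intro i j
      have h := htri i.1 ℓ j.1
      rw [inner_diff] at h
      show ⟪v i.1 - v ℓ, v j.1 - v ℓ⟫ ≤ ⟪v i.1 - v ℓ, v i.1 - v ℓ⟫
      rw [inner_diff, inner_diff]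
      linarith [real_inner_comm (v ℓ) (v i.1), real_inner_comm (v ℓ) (v j.1),
        real_inner_comm (v i.1) (v j.1)]
    refine ⟨fun i j => htri ℓ i.1 j.1, hdiag, fun i j k => ?_⟩
    by_cases hki : k = i
    · subst hki; exact min_le_right _ _
    by_cases hkj : k = j
    · subst hkj; exact min_le_left _ _
    by_cases hij : i = j
    · subst hij; exact le_trans (min_le_left _ _) (hdiag i k)
    have hij' : i.1 ≠ j.1 := fun h => hij (Subtype.ext h)
    have hik' : i.1 ≠ k.1 := fun h => hki (Subtype.ext h.symm)
    have hjk' : j.1 ≠ k.1 := fun h => hkj (Subtype.ext h.symm)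
    obtain ⟨m, hmℓ, hmi, hmj, hmk⟩ := exists_fifth ℓ i.1 j.1 k.1
      (Ne.symm i.2) (Ne.symm j.2) (Ne.symm k.2) hij' hik' hjk'
    have hcov := cover5 ℓ i.1 j.1 k.1 m (Ne.symm i.2) (Ne.symm j.2) (Ne.symm k.2)
      (Ne.symm hmℓ) hij' hik' (Ne.symm hmi) hjk' (Ne.symm hmj) (Ne.symm hmk)
    -- nonblocking of the Gramian at vertex i, column j
    obtain ⟨r, hrne, hrmin⟩ := hnb i.1 ⟨j.1, Ne.symm hij'⟩
    have hrvj : r.1 ≠ j.1 := fun h => hrne (Subtype.ext h)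
    have mk12 : ∀ t₀ : Fin 5, t₀ ≠ 1 → t₀ ≠ 2 → ![ℓ, i.1, j.1, k.1, m] t₀ = r.1 →
        (∃ w : Fin 5, w ≠ 1 ∧ w ≠ 2 ∧ ∀ t : Fin 5, t ≠ 1 →
          ⟪v (![ℓ, i.1, j.1, k.1, m] w) - v i.1, v j.1 - v i.1⟫ ≤
          ⟪v (![ℓ, i.1, j.1, k.1, m] w) - v i.1, v (![ℓ, i.1, j.1, k.1, m] t) - v i.1⟫) := by
      intro t₀ ht1 ht2 hteq
      refine ⟨t₀, ht1, ht2, fun t ht => ?_⟩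
      have hcol : ![ℓ, i.1, j.1, k.1, m] t ≠ i.1 := by
        rcases fin5_cases t with rfl | rfl | rfl | rfl | rfl
        · exact Ne.symm i.2
        · exact absurd rfl ht
        · exact Ne.symm hij'
        · exact Ne.symm hik'
        · exact hmi
      have h' : ⟪v r.1 - v i.1, v j.1 - v i.1⟫ ≤
          ⟪v r.1 - v i.1, v (![ℓ, i.1, j.1, k.1, m] t) - v i.1⟫ := hrmin ⟨_, hcol⟩
      rw [← hteq] at h'
      exact h'
    have hnb12 : ∃ w : Fin 5, w ≠ 1 ∧ w ≠ 2 ∧ ∀ t : Fin 5, t ≠ 1 →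
        ⟪v (![ℓ, i.1, j.1, k.1, m] w) - v i.1, v j.1 - v i.1⟫ ≤
        ⟪v (![ℓ, i.1, j.1, k.1, m] w) - v i.1, v (![ℓ, i.1, j.1, k.1, m] t) - v i.1⟫ := by
      rcases hcov r.1 with hr | hr | hr | hr | hr
      · exact mk12 0 (by decide) (by decide) hr.symm
      · exact absurd hr r.2
      · exact absurd hr hrvj
      · exact mk12 3 (by decide) (by decide) hr.symm
      · exact mk12 4 (by decide) (by decide) hr.symm
    -- nonblocking of the Gramian at vertex ℓ, column k
    obtain ⟨r', hr'ne, hr'min⟩ := hnb ℓ k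
    have hr'vk : r'.1 ≠ k.1 := fun h => hr'ne (Subtype.ext h)
    have mk03 : ∀ t₀ : Fin 5, t₀ ≠ 0 → t₀ ≠ 3 → ![ℓ, i.1, j.1, k.1, m] t₀ = r'.1 →
        (∃ w : Fin 5, w ≠ 0 ∧ w ≠ 3 ∧ ∀ t : Fin 5, t ≠ 0 →
          ⟪v (![ℓ, i.1, j.1, k.1, m] w) - v ℓ, v k.1 - v ℓ⟫ ≤
          ⟪v (![ℓ, i.1, j.1, k.1, m] w) - v ℓ, v (![ℓ, i.1, j.1, k.1, m] t) - v ℓ⟫) := by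
      intro t₀ ht1 ht2 hteq
      refine ⟨t₀, ht1, ht2, fun t ht => ?_⟩
      have hcol : ![ℓ, i.1, j.1, k.1, m] t ≠ ℓ := by
        rcases fin5_cases t with rfl | rfl | rfl | rfl | rfl
        · exact absurd rfl ht
        · exact i.2
        · exact j.2
        · exact k.2
        · exact hmℓ
      have h' : ⟪v r'.1 - v ℓ, v k.1 - v ℓ⟫ ≤
          ⟪v r'.1 - v ℓ, v (![ℓ, i.1, j.1, k.1, m] t) - v ℓ⟫ := hr'min ⟨_, hcol⟩
      rw [← hteq] at h'
      exact h'
    have hnb03 : ∃ w : Fin 5, w ≠ 0 ∧ w ≠ 3 ∧ ∀ t : Fin 5, t ≠ 0 →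
        ⟪v (![ℓ, i.1, j.1, k.1, m] w) - v ℓ, v k.1 - v ℓ⟫ ≤
        ⟪v (![ℓ, i.1, j.1, k.1, m] w) - v ℓ, v (![ℓ, i.1, j.1, k.1, m] t) - v ℓ⟫ := by
      rcases hcov r'.1 with hr | hr | hr | hr | hr
      · exact absurd hr r'.2
      · exact mk03 1 (by decide) (by decide) hr.symm
      · exact mk03 2 (by decide) (by decide) hr.symm
      · exact absurd hr hr'vk
      · exact mk03 4 (by decide) (by decide) hr.symm
    exact core_min (fun t => v (![ℓ, i.1, j.1, k.1, m] t))
      (fun a b c => htri _ _ _) hnb12 hnb03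
  · intro hu ℓ
    exact ultra_to_nonblocking v ℓ (hu ℓ)
end
end
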